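/- arXiv:2101.12453 — 2 statements merged into one kernel-verified Lean document; each statement's English description precedes it below -/
import Mathlib

section
/- Let c₀,...,cₙ be independent random variables uniformly distributed on [−1,1], with n ≥ 1 and N > 0. Let c = max(|c₀|,...,|c_{n−1}|). Then P(c ≤ |cₙ|·N) = 1 − 1/N + 1/((n+1)N) whenever N ≥ 1; in particular P(c ≤ |cₙ|·N) > 1 − 1/N. -/
/-!
Conditioning on `cₙ = t`, the event asks that the `n` independent coordinates `c₀, …, c_{n-1}`
all lie in `[-|t| N, |t| N]`, which has probability `min (|t| N) 1 ^ n`. As `|cₙ|` is uniform on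
`[0, 1]`, the probability is `∫₀¹ min (t N) 1 ^ n dt = ∫₀^{1/N} (t N) ^ n dt + (1 - 1/N)
= 1 / ((n + 1) N) + 1 - 1/N`.
-/

open MeasureTheory Set intervalIntegral
open scoped ENNReal

noncomputable def uniformNegOneOne : Measure ℝ :=
  (2 : ℝ≥0∞)⁻¹ • volume.restrict (Icc (-1 : ℝ) 1)

lemma uniformNegOneOne_Icc_neg (a : ℝ) :
    uniformNegOneOne (Icc (-a) a) = ENNReal.ofReal (min a 1) := by
  rw [uniformNegOneOne, Measure.smul_apply, Measure.restrict_apply measurableSet_Icc,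
    Icc_inter_Icc, max_neg_neg, Real.volume_Icc, smul_eq_mul,
    show min a 1 - -min a 1 = 2 * min a 1 by ring, ENNReal.ofReal_mul zero_le_two,
    ENNReal.ofReal_ofNat, ← mul_assoc, ENNReal.inv_mul_cancel two_ne_zero ENNReal.ofNat_ne_top,
    one_mul]

instance : IsProbabilityMeasure uniformNegOneOne := by
  constructor
  rw [uniformNegOneOne, Measure.smul_apply, Measure.restrict_apply_univ, Real.volume_Icc]
  norm_num
  exact ENNReal.inv_mul_cancel two_ne_zero ENNReal.ofNat_ne_top

lemma uniformNegOneOne_abs_le (a : ℝ) :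
    uniformNegOneOne {x | |x| ≤ a} = ENNReal.ofReal (min a 1) := by
  simp_rw [abs_le]
  exact uniformNegOneOne_Icc_neg a

lemma lintegral_uniformNegOneOne_ofReal_comp_abs {f : ℝ → ℝ} (hf : Continuous f)
    (hf₀ : ∀ t, 0 ≤ t → 0 ≤ f t) :
    ∫⁻ t, ENNReal.ofReal (f |t|) ∂uniformNegOneOne = ENNReal.ofReal (∫ t in 0..1, f t) := by
  have hfa : Continuous fun t => f |t| := by fun_prop
  have hsymm : ∫ t in (-1 : ℝ)..0, f |t| = ∫ t in (0 : ℝ)..1, f |t| := by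
    simpa using (integral_comp_neg (a := 0) (b := 1) fun t => f |t|).symm
  have hpos : ∫ t in (0 : ℝ)..1, f |t| = ∫ t in (0 : ℝ)..1, f t :=
    integral_congr fun t ht => by
      rw [uIcc_of_le zero_le_one] at ht
      rw [abs_of_nonneg ht.1]
  have hreal : ∫ t in Icc (-1 : ℝ) 1, f |t| = 2 * ∫ t in (0 : ℝ)..1, f t := by
    rw [integral_Icc_eq_integral_Ioc, ← integral_of_le (by norm_num),
      ← integral_add_adjacent_intervals (b := 0) (hfa.intervalIntegrable _ _)
        (hfa.intervalIntegrable _ _), hsymm, hpos, two_mul]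
  rw [uniformNegOneOne, lintegral_smul_measure,
    ← ofReal_integral_eq_lintegral_ofReal hfa.integrableOn_Icc
      (ae_of_all _ fun t => hf₀ _ (abs_nonneg t)),
    hreal, ENNReal.ofReal_mul zero_le_two, ENNReal.ofReal_ofNat, smul_eq_mul, ← mul_assoc,
    ENNReal.inv_mul_cancel two_ne_zero ENNReal.ofNat_ne_top, one_mul]

theorem MeasureTheory.Measure.pi_setOf_forall_castSucc_mem {α : Type*} [MeasurableSpace α]
    (μ : Measure α) [SigmaFinite μ] (n : ℕ) {R : Set (α × α)} (hR : MeasurableSet R) :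
    Measure.pi (fun _ : Fin (n + 1) => μ)
        {ω | ∀ i : Fin n, (ω (Fin.last n), ω i.castSucc) ∈ R}
      = ∫⁻ t, μ (Prod.mk t ⁻¹' R) ^ n ∂μ := by
  set T : Set (α × (Fin n → α)) := {p | ∀ i, (p.1, p.2 i) ∈ R}
  have hT : MeasurableSet T := by
    simp only [T, ofPred_forall]
    exact MeasurableSet.iInter fun i => hR.preimage (by fun_prop)
  have hpre : {ω : Fin (n + 1) → α | ∀ i : Fin n, (ω (Fin.last n), ω i.castSucc) ∈ R}
      = MeasurableEquiv.piFinSuccAbove (fun _ => α) (Fin.last n) ⁻¹' T := by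
    ext ω
    simp [T, MeasurableEquiv.piFinSuccAbove_apply, Fin.insertNthEquiv, Fin.init]
  have hslice (t : α) : Prod.mk t ⁻¹' T = univ.pi fun _ : Fin n => Prod.mk t ⁻¹' R := by
    ext x
    simp [T]
  rw [hpre, (measurePreserving_piFinSuccAbove (fun _ => μ) (Fin.last n)).measure_preimage
    hT.nullMeasurableSet, Measure.prod_apply hT]
  simp_rw [hslice, Measure.pi_pi, Finset.prod_const, Finset.card_univ, Fintype.card_fin]

lemma integral_min_mul_one_pow (n : ℕ) {N : ℝ} (hN : 1 ≤ N) :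
    ∫ t in (0 : ℝ)..1, min (t * N) 1 ^ n = 1 - 1 / N + 1 / ((n + 1) * N) := by
  have hN₀ : 0 < N := zero_lt_one.trans_le hN
  have hcont : Continuous fun t : ℝ => min (t * N) 1 ^ n := by fun_prop
  have hinvN : 0 ≤ 1 / N ∧ 1 / N ≤ 1 := ⟨by positivity, (div_le_one hN₀).2 hN⟩
  have hlow : ∫ t in (0 : ℝ)..1 / N, min (t * N) 1 ^ n = 1 / ((n + 1) * N) := by
    have hmin : ∀ t ∈ uIcc 0 (1 / N), min (t * N) 1 ^ n = (t * N) ^ n := fun t ht => by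
      rw [uIcc_of_le hinvN.1] at ht
      rw [min_eq_left ((le_div_iff₀ hN₀).1 (by simpa using ht.2))]
    rw [integral_congr hmin, integral_comp_mul_right (· ^ n) hN₀.ne', integral_pow]
    simp only [zero_mul, one_div_mul_cancel hN₀.ne', one_pow, zero_pow (Nat.succ_ne_zero n),
      sub_zero, smul_eq_mul]
    field_simp
  have hhigh : ∫ t in 1 / N..1, min (t * N) 1 ^ n = 1 - 1 / N := by
    have hmin : ∀ t ∈ uIcc (1 / N) 1, min (t * N) 1 ^ n = 1 := fun t ht => by
      rw [uIcc_of_le hinvN.2] at ht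
      rw [min_eq_right ((div_le_iff₀ hN₀).1 ht.1), one_pow]
    rw [integral_congr hmin, intervalIntegral.integral_const, smul_eq_mul, mul_one]
  rw [← integral_add_adjacent_intervals (b := 1 / N) (hcont.intervalIntegrable _ _)
    (hcont.intervalIntegrable _ _), hlow, hhigh]
  ring

lemma pi_uniformNegOneOne_abs_castSucc_le (n : ℕ) {N : ℝ} (hN : 1 ≤ N) :
    Measure.pi (fun _ : Fin (n + 1) => uniformNegOneOne)
        {ω | ∀ i : Fin n, |ω i.castSucc| ≤ |ω (Fin.last n)| * N}
      = ENNReal.ofReal (1 - 1 / N + 1 / ((n + 1) * N)) := by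
  have hN₀ : 0 < N := zero_lt_one.trans_le hN
  have hR : MeasurableSet {p : ℝ × ℝ | |p.2| ≤ |p.1| * N} :=
    measurableSet_le (by fun_prop) (by fun_prop)
  refine (Measure.pi_setOf_forall_castSucc_mem _ n hR).trans ?_
  have hslice (t : ℝ) : uniformNegOneOne {x | |x| ≤ |t| * N} ^ n
      = ENNReal.ofReal (min (|t| * N) 1 ^ n) := by
    rw [uniformNegOneOne_abs_le, ENNReal.ofReal_pow (le_min (by positivity) zero_le_one)]
  refine (lintegral_congr fun t => hslice t).trans ?_
  rw [lintegral_uniformNegOneOne_ofReal_comp_abs (f := fun t => min (t * N) 1 ^ n)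
    (by fun_prop) fun t ht => by positivity, integral_min_mul_one_pow n hN]

/-- with `c₀,…,cₙ` i.i.d. uniform on `[−1,1]` and
`c = max(|c₀|,…,|c_{n−1}|)`, for `N ≥ 1` one has
`P(c ≤ |cₙ|·N) = 1 − 1/N + 1/((n+1)N) > 1 − 1/N`. -/
theorem stmt5 (n : ℕ) (hn : 1 ≤ n) (N : ℝ) (hN : 1 ≤ N)
    (P : Measure (Fin (n + 1) → ℝ))
    (hP : P = Measure.pi fun _ =>
      (2 : ENNReal)⁻¹ • volume.restrict (Set.Icc (-1 : ℝ) 1)) :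
    P {ω | (Finset.univ : Finset (Fin n)).sup'
          ⟨⟨0, hn⟩, Finset.mem_univ _⟩
          (fun i => |ω i.castSucc|) ≤ |ω (Fin.last n)| * N}
      = ENNReal.ofReal (1 - 1 / N + 1 / ((n + 1) * N)) ∧
    ENNReal.ofReal (1 - 1 / N) <
      P {ω | (Finset.univ : Finset (Fin n)).sup'
          ⟨⟨0, hn⟩, Finset.mem_univ _⟩
          (fun i => |ω i.castSucc|) ≤ |ω (Fin.last n)| * N} := by
  have hevent : {ω : Fin (n + 1) → ℝ | (Finset.univ : Finset (Fin n)).sup'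
      ⟨⟨0, hn⟩, Finset.mem_univ _⟩ (fun i => |ω i.castSucc|) ≤ |ω (Fin.last n)| * N}
      = {ω | ∀ i : Fin n, |ω i.castSucc| ≤ |ω (Fin.last n)| * N} := by
    ext ω
    exact ⟨fun h i => (Finset.le_sup' (fun i => |ω i.castSucc|) (Finset.mem_univ i)).trans h,
      fun h => Finset.sup'_le _ _ fun i _ => h i⟩
  have hprob : P _ = _ := hP ▸ pi_uniformNegOneOne_abs_castSucc_le n hN
  rw [hevent]
  have hgap : 0 < 1 / ((n + 1) * N) := by positivity
  have hinvN : 1 / N ≤ 1 := (div_le_one (by positivity)).2 hN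
  exact ⟨hprob, hprob ▸ (ENNReal.ofReal_lt_ofReal_iff (by linarith)).2 (by linarith)⟩
end

section
/- The Choi–Lam polynomial f(x,y,z) = x²y² + x²z² + y²z² − 4xyz + 1 is nonnegative on ℝ³, and its real zero set is exactly the four points {(1,1,1), (1,−1,−1), (−1,1,−1), (−1,−1,1)}. -/
/-!
With `a = |x|`, `b = |y|`, `c = |z|` one has `f(x,y,z) = f(a,b,c) + 4(|xyz| - xyz)`, and
`f(a,b,c) = (ab - ac)² + (bc - 1)² + 2bc(a - 1)²` is a sum of nonnegative terms once `b, c ≥ 0`.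
At a zero every term vanishes, forcing `a = b = c = 1` and `xyz = |xyz| = 1`.
-/

def choiLam (x y z : ℝ) : ℝ :=
  x ^ 2 * y ^ 2 + x ^ 2 * z ^ 2 + y ^ 2 * z ^ 2 - 4 * x * y * z + 1

lemma choiLam_eq_sq_add_sq_add_mul_sq (a b c : ℝ) :
    choiLam a b c = (a * b - a * c) ^ 2 + (b * c - 1) ^ 2 + 2 * (b * c) * (a - 1) ^ 2 := by
  unfold choiLam; ring

lemma choiLam_eq_choiLam_abs_add (x y z : ℝ) :
    choiLam x y z = choiLam |x| |y| |z| + 4 * (|x * y * z| - x * y * z) := by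
  simp only [choiLam, abs_mul, sq_abs]; ring

lemma choiLam_nonneg_of_nonneg (a : ℝ) {b c : ℝ} (hb : 0 ≤ b) (hc : 0 ≤ c) :
    0 ≤ choiLam a b c := by
  rw [choiLam_eq_sq_add_sq_add_mul_sq]; positivity

lemma choiLam_nonneg (x y z : ℝ) : 0 ≤ choiLam x y z := by
  rw [choiLam_eq_choiLam_abs_add]
  have := choiLam_nonneg_of_nonneg |x| (abs_nonneg y) (abs_nonneg z)
  linarith [le_abs_self (x * y * z)]

lemma eq_one_of_choiLam_eq_zero {a b c : ℝ} (hb : 0 ≤ b) (hc : 0 ≤ c)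
    (h : choiLam a b c = 0) : a = 1 ∧ b = 1 ∧ c = 1 := by
  rw [choiLam_eq_sq_add_sq_add_mul_sq] at h
  obtain ⟨h₁₂, h₃⟩ := (add_eq_zero_iff_of_nonneg (by positivity) (by positivity)).1 h
  obtain ⟨h₁, h₂⟩ := (add_eq_zero_iff_of_nonneg (by positivity) (by positivity)).1 h₁₂
  have hbc : b * c = 1 := by linarith [pow_eq_zero_iff (n := 2) two_ne_zero |>.1 h₂]
  have ha : a = 1 := by
    rw [hbc, mul_one, mul_eq_zero] at h₃
    linarith [pow_eq_zero_iff (n := 2) two_ne_zero |>.1 (h₃.resolve_left two_ne_zero)]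
  have hcb : c = b := by
    rw [ha, one_mul, one_mul, sq_eq_zero_iff, sub_eq_zero] at h₁
    exact h₁.symm
  rw [hcb, ← sq] at hbc
  have hb1 : b = 1 := (pow_eq_one_iff_of_nonneg hb two_ne_zero).1 hbc
  exact ⟨ha, hb1, hcb.trans hb1⟩

lemma choiLam_eq_zero_iff (x y z : ℝ) :
    choiLam x y z = 0 ↔
      (x, y, z) ∈ ({(1, 1, 1), (1, -1, -1), (-1, 1, -1), (-1, -1, 1)} : Set (ℝ × ℝ × ℝ)) := by
  simp only [Set.mem_insert_iff, Set.mem_singleton_iff, Prod.mk.injEq]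
  constructor
  · intro h
    rw [choiLam_eq_choiLam_abs_add] at h
    have hf₀ := choiLam_nonneg_of_nonneg |x| (abs_nonneg y) (abs_nonneg z)
    have hg₀ := sub_nonneg.2 (le_abs_self (x * y * z))
    obtain ⟨hf, hg⟩ := (add_eq_zero_iff_of_nonneg hf₀ (mul_nonneg zero_le_four hg₀)).1 h
    obtain ⟨hx, hy, hz⟩ := eq_one_of_choiLam_eq_zero (abs_nonneg y) (abs_nonneg z) hf
    have hxyz : x * y * z = 1 := by
      rw [abs_mul, abs_mul, hx, hy, hz] at hg; linarith
    rw [abs_eq zero_le_one] at hx hy hz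
    rcases hx with rfl | rfl <;> rcases hy with rfl | rfl <;> rcases hz with rfl | rfl <;>
      (revert hxyz; norm_num)
  · rintro (⟨rfl, rfl, rfl⟩ | ⟨rfl, rfl, rfl⟩ | ⟨rfl, rfl, rfl⟩ | ⟨rfl, rfl, rfl⟩) <;>
      norm_num [choiLam]

/-- the Choi–Lam polynomial
`f(x,y,z) = x²y² + x²z² + y²z² − 4xyz + 1` is nonnegative on `ℝ³` and its real
zero set is exactly `{(1,1,1), (1,−1,−1), (−1,1,−1), (−1,−1,1)}`. -/
theorem stmt15 :
    (∀ x y z : ℝ,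
      0 ≤ x ^ 2 * y ^ 2 + x ^ 2 * z ^ 2 + y ^ 2 * z ^ 2 - 4 * x * y * z + 1) ∧
    {p : ℝ × ℝ × ℝ |
        p.1 ^ 2 * p.2.1 ^ 2 + p.1 ^ 2 * p.2.2 ^ 2 + p.2.1 ^ 2 * p.2.2 ^ 2
          - 4 * p.1 * p.2.1 * p.2.2 + 1 = 0} =
      {(1, 1, 1), (1, -1, -1), (-1, 1, -1), (-1, -1, 1)} := by
  refine ⟨choiLam_nonneg, ?_⟩
  ext ⟨x, y, z⟩
  exact choiLam_eq_zero_iff x y z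
end
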